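/- For every integer n ≥ 2 and every real (or indeterminate) μ, the determinant of the n×n matrix with (i,j) entry c_{i,j} = 1 + (−1)^{i+j} − δ_{i,j}·2μ/(2i+1) (for 1 ≤ i,j ≤ n) equals ((−1)^n / (3/2)_n) · μ^{n−2} · (μ − 2⌊n/2⌋² − 3⌊n/2⌋) · (μ − 2⌈n/2⌉² − ⌈n/2⌉); equivalently it equals ((−1)^n/(3/2)_n)·μ^{n−2}·(μ − (n²+3n)/2)·(μ − (n²+n)/2) if n is even, and ((−1)^n/(3/2)_n)·μ^{n−2}·(μ − (n²+3n+2)/2)·(μ − (n²+n−2)/2) if n is odd. -/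

import Mathlib

/-!
Since `1 + (-1)^(i+j)` is `2` when `i ≡ j (mod 2)` and `0` otherwise, listing the even
indices before the odd ones turns `C` into a block diagonal matrix. Each block has the form
`2 - δ_{kl} 2μ / w_k`; pulling `w_l` out of column `l` leaves `vecMulVec 1 (2 • w) - 2μ`, and
the determinant of a scalar minus a rank-one matrix is read off from its characteristic
polynomial: `det (t - u vᵀ) = t^(m-1) (t - v ⬝ u)`. The two products of weights `∏ (4k+3)` and
`∏ (4k+5)` interleave to `∏_{i<n} (2i+3) = 2^n (3/2)_n`.
-/

open Matrix Finset

theorem ascPochhammer_eval_eq_prod_range {S : Type*} [CommSemiring S] (n : ℕ) (x : S) :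
    (ascPochhammer S n).eval x = ∏ i ∈ range n, (x + i) := by
  induction n with
  | zero => simp
  | succ n ih => rw [ascPochhammer_succ_eval, ih, prod_range_succ]

section RankOne

variable {n : Type*} [Fintype n] [DecidableEq n] [Nonempty n]

theorem det_scalar_sub_vecMulVec {R : Type*} [CommRing R] (t : R) (u v : n → R) :
    (scalar n t - vecMulVec u v).det = t ^ (Fintype.card n - 1) * (t - u ⬝ᵥ v) := by
  have hcard : Fintype.card n = Fintype.card n - 1 + 1 :=
    (Nat.sub_add_cancel Fintype.card_pos).symm
  rw [← eval_charpoly, charpoly_vecMulVec]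
  simp only [Polynomial.eval_sub, Polynomial.eval_pow, Polynomial.eval_X, Polynomial.eval_smul,
    smul_eq_mul]
  rw [hcard, pow_succ, Nat.add_sub_cancel]
  ring

theorem det_const_sub_diagonal_div {K : Type*} [Field K] (c d : K) (w : n → K)
    (hw : ∀ i, w i ≠ 0) :
    (of fun i j => c - if i = j then d / w i else 0).det
      = (-1) ^ Fintype.card n * d ^ (Fintype.card n - 1) * (d - c * ∑ i, w i) / ∏ i, w i := by
  have hfactor : (of fun i j => c - if i = j then d / w i else 0)
      = -(scalar n d - vecMulVec 1 (c • w)) * diagonal w⁻¹ := by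
    ext i j
    by_cases h : i = j
    · subst h
      simp [sub_mul, mul_inv_cancel_right₀ (hw i), div_eq_mul_inv]
    · simp [h, hw j]
  rw [hfactor, det_mul, det_neg, det_scalar_sub_vecMulVec, det_diagonal]
  simp [dotProduct, ← mul_sum, div_eq_mul_inv, mul_assoc]

end RankOne

noncomputable def finEvenOddEquiv (n : ℕ) : Fin ((n + 1) / 2) ⊕ Fin (n / 2) ≃ Fin n :=
  Equiv.ofBijective
    (Sum.elim (fun k => ⟨2 * k, by omega⟩) (fun k => ⟨2 * k + 1, by omega⟩)) <| by
    refine (Fintype.bijective_iff_injective_and_card _).mpr ⟨?_, by simp; omega⟩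
    rintro (k | k) (l | l) h <;> simp [Fin.ext_iff] at h ⊢ <;> omega

theorem prod_finEvenOddEquiv {M : Type*} [CommMonoid M] (n : ℕ) (f : ℕ → M) :
    (∏ k : Fin ((n + 1) / 2), f (2 * k)) * ∏ k : Fin (n / 2), f (2 * k + 1)
      = ∏ i : Fin n, f i := by
  rw [← Fintype.prod_equiv (finEvenOddEquiv n) (fun x => f (finEvenOddEquiv n x)) _ fun _ => rfl,
    Fintype.prod_sum_type]
  rfl

theorem sum_four_mul_add {R : Type*} [CommRing R] (m : ℕ) (a : R) :
    ∑ k : Fin m, (4 * (k : R) + a) = m * (2 * m + a - 2) := by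
  rw [Fin.sum_univ_eq_sum_range (fun k : ℕ => 4 * (k : R) + a)]
  induction m with
  | zero => simp
  | succ m ih => rw [sum_range_succ, ih]; push_cast; ring

theorem prod_four_mul_add_three_mul_prod_four_mul_add_five (n : ℕ) :
    (∏ k : Fin ((n + 1) / 2), (4 * ((k : ℕ) : ℝ) + 3)) *
        ∏ k : Fin (n / 2), (4 * ((k : ℕ) : ℝ) + 5)
      = 2 ^ n * (ascPochhammer ℝ n).eval (3 / 2 : ℝ) :=
  calc _ = (∏ k : Fin ((n + 1) / 2), (2 * ((2 * k : ℕ) : ℝ) + 3)) *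
        ∏ k : Fin (n / 2), (2 * ((2 * k + 1 : ℕ) : ℝ) + 3) := by
        congr 1 <;> exact prod_congr rfl fun k _ => by push_cast; ring
    _ = ∏ i : Fin n, (2 * (i : ℝ) + 3) := prod_finEvenOddEquiv n fun i => 2 * (i : ℝ) + 3
    _ = ∏ i ∈ range n, 2 * (3 / 2 + (i : ℝ)) := by
        rw [Fin.prod_univ_eq_prod_range fun i => 2 * (i : ℝ) + 3]
        exact prod_congr rfl fun i _ => by ring
    _ = _ := by rw [prod_mul_distrib, prod_const, card_range, ascPochhammer_eval_eq_prod_range]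

noncomputable def cMatrix (n : ℕ) (μ : ℝ) : Matrix (Fin n) (Fin n) ℝ :=
  of fun i j => 1 + (-1 : ℝ) ^ (((i : ℕ) + 1) + ((j : ℕ) + 1)) -
    (if i = j then 2 * μ / (2 * ((i : ℕ) + 1 : ℝ) + 1) else 0)

noncomputable def parityBlock (μ a : ℝ) (m : ℕ) : Matrix (Fin m) (Fin m) ℝ :=
  of fun k l => 2 - if k = l then 2 * μ / (4 * (k : ℕ) + a) else 0

theorem cMatrix_submatrix_finEvenOddEquiv (n : ℕ) (μ : ℝ) :
    (cMatrix n μ).submatrix (finEvenOddEquiv n) (finEvenOddEquiv n)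
      = fromBlocks (parityBlock μ 3 _) 0 0 (parityBlock μ 5 _) := by
  ext (k | k) (l | l) <;>
    simp [cMatrix, parityBlock, finEvenOddEquiv, Fin.ext_iff, pow_add, pow_mul]
  all_goals first | omega | (norm_num; ring_nf)

theorem det_parityBlock (μ : ℝ) {a : ℝ} (ha : 0 < a) (m : ℕ) [NeZero m] :
    (parityBlock μ a m).det = (-1) ^ m * (2 * μ) ^ (m - 1) * (2 * μ - 2 * (m * (2 * m + a - 2)))
      / ∏ k : Fin m, (4 * ((k : ℕ) : ℝ) + a) := by
  rw [parityBlock, det_const_sub_diagonal_div _ _ _ fun k => by positivity, Fintype.card_fin,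
    sum_four_mul_add]

/-- For `n ≥ 2`:
`det_{1≤i,j≤n}(1 + (−1)^{i+j} − δ_{i,j} 2μ/(2i+1))
  = ((−1)^n/(3/2)_n) μ^{n−2} (μ − 2⌊n/2⌋² − 3⌊n/2⌋)(μ − 2⌈n/2⌉² − ⌈n/2⌉)`. -/
theorem det_C (n : ℕ) (hn : 2 ≤ n) (mu : ℝ) :
    Matrix.det (Matrix.of (fun i j : Fin n =>
      1 + (-1 : ℝ) ^ (((i : ℕ) + 1) + ((j : ℕ) + 1)) -
        (if i = j then 2 * mu / (2 * ((i : ℕ) + 1 : ℝ) + 1) else 0)))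
    = (-1) ^ n / (ascPochhammer ℝ n).eval (3 / 2 : ℝ) * mu ^ (n - 2) *
        (mu - 2 * ((n / 2 : ℕ) : ℝ) ^ 2 - 3 * ((n / 2 : ℕ) : ℝ)) *
        (mu - 2 * (((n + 1) / 2 : ℕ) : ℝ) ^ 2 - (((n + 1) / 2 : ℕ) : ℝ)) := by
  change (cMatrix n mu).det = _
  set p := (n + 1) / 2
  set q := n / 2
  have : NeZero p := ⟨by omega⟩
  have : NeZero q := ⟨by omega⟩
  rw [← det_submatrix_equiv_self (finEvenOddEquiv n), cMatrix_submatrix_finEvenOddEquiv,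
    det_fromBlocks_zero₂₁, det_parityBlock mu three_pos,
    det_parityBlock mu (by norm_num : (0 : ℝ) < 5),
    div_mul_div_comm, prod_four_mul_add_three_mul_prod_four_mul_add_five]
  have hsign : (-1 : ℝ) ^ p * (-1) ^ q = (-1) ^ n := by rw [← pow_add]; congr 1; omega
  have hpow : (2 * mu) ^ (p - 1) * (2 * mu) ^ (q - 1) * 4 = 2 ^ n * mu ^ (n - 2) := by
    rw [← pow_add, mul_pow, show n - 2 = p - 1 + (q - 1) by omega,
      show n = p - 1 + (q - 1) + 2 by omega]
    ring
  calc _ = (-1) ^ p * (-1) ^ q * ((2 * mu) ^ (p - 1) * (2 * mu) ^ (q - 1) * 4) *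
        (mu - 2 * p ^ 2 - p) * (mu - 2 * q ^ 2 - 3 * q) /
          (2 ^ n * (ascPochhammer ℝ n).eval (3 / 2 : ℝ)) := by ring
    _ = _ := by rw [hsign, hpow]; field_simp
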